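/- arXiv:math/0512393 — 3 statements merged into one kernel-verified Lean document; each statement's English description precedes it below -/
import Mathlib

section
/- (Universal dilation existence) For every finite state space E there exist a finite set G, a bijection α : E × G^ℤ → E × G^ℤ of the form ϑ∘φ₁, and for every sequence of stochastic matrices (P(t))_{t≥1} on E a product probability measure Q_{P} on G^ℤ (with independent coordinates), such that under ℙ_{k,P} = δ_k ⊗ Q_P on Ω = E × G^ℤ, the process Xₜ = X₀∘αᵗ is a Markov chain started at k with transition matrix P(t) at step t, i.e., ℙ_{k,P}(X_{t+1} = j | X₀, Y₁,...,Yₜ) = p_{Xₜ,j}(t+1) almost surely. -/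
/-- The free shift `ϑ` of the environment, extended trivially to `Ω = E × G^ℤ`. -/
def shiftE (E G : Type*) : (E × (ℤ → G)) ≃ (E × (ℤ → G)) where
  toFun ω := (ω.1, fun n => ω.2 (n + 1))
  invFun ω := (ω.1, fun n => ω.2 (n - 1))
  left_inv ω := by
    obtain ⟨i, γ⟩ := ω
    simp only [Prod.mk.injEq]
    exact ⟨trivial, funext fun n => by norm_num⟩
  right_inv ω := by
    obtain ⟨i, γ⟩ := ω
    simp only [Prod.mk.injEq]
    exact ⟨trivial, funext fun n => by norm_num⟩

/-- The coupling `φ₁` of the system with the first environment coordinate,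
extended to `Ω = E × G^ℤ` leaving all other coordinates fixed. -/
def phiExt {E G : Type*} (φ : E × G → E × G) : E × (ℤ → G) → E × (ℤ → G) :=
  fun ω => ((φ (ω.1, ω.2 1)).1, Function.update ω.2 1 (φ (ω.1, ω.2 1)).2)

/-!
Take `G = E × (E → E)`. The coupling reads the current state `i` and the function `ℓ` stored
in the next environment coordinate, jumps to `ℓ i`, and leaves behind `(i, ℓ')`, where `ℓ'`
agrees with `ℓ` except that `ℓ' i` remembers the old first component; this is what makes it
invertible. Under the environment law in which the values `ℓ i` are independent with `ℓ i`
distributed as row `i` of `P(t)`, the new state `ℓ (X t)` is distributed as row `X t` of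
`P(t + 1)`, because `X t` only depends on the environment coordinates `1, …, t`.
-/

open Finset

section Dilation

variable {E G : Type*} (φ : E × G → E × G)

theorem iterate_shiftE_comp_phiExt_snd (t : ℕ) (ω : E × (ℤ → G)) {n : ℤ} (hn : 1 ≤ n) :
    ((⇑(shiftE E G) ∘ phiExt φ)^[t] ω).2 n = ω.2 (n + t) := by
  induction t generalizing n with
  | zero => simp
  | succ t ih =>
    rw [Function.iterate_succ_apply']
    change Function.update _ 1 _ (n + 1) = _
    rw [Function.update_of_ne (by omega), ih (by omega), Nat.cast_succ, add_right_comm, add_assoc]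

theorem iterate_succ_shiftE_comp_phiExt_fst (t : ℕ) (ω : E × (ℤ → G)) :
    ((⇑(shiftE E G) ∘ phiExt φ)^[t + 1] ω).1 =
      (φ (((⇑(shiftE E G) ∘ phiExt φ)^[t] ω).1, ω.2 (t + 1))).1 := by
  rw [Function.iterate_succ_apply', add_comm (t : ℤ),
    ← iterate_shiftE_comp_phiExt_snd φ t ω le_rfl]
  rfl

theorem iterate_shiftE_comp_phiExt_fst_congr (t : ℕ) (k : E) {γ γ' : ℤ → G}
    (h : ∀ s : ℕ, 1 ≤ s → s ≤ t → γ s = γ' s) :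
    ((⇑(shiftE E G) ∘ phiExt φ)^[t] (k, γ)).1 =
      ((⇑(shiftE E G) ∘ phiExt φ)^[t] (k, γ')).1 := by
  induction t with
  | zero => rfl
  | succ t ih =>
    have hγ : γ (t + 1) = γ' (t + 1) := by exact_mod_cast h (t + 1) (by omega) le_rfl
    rw [iterate_succ_shiftE_comp_phiExt_fst, iterate_succ_shiftE_comp_phiExt_fst,
      ih fun s hs hst => h s hs (by omega)]
    exact congrArg (fun g => (φ (_, g)).1) hγ

theorem iterate_succ_shiftE_comp_phiExt_fst_update (t : ℕ) (k : E) (γ : ℤ → G) (g : G) :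
    ((⇑(shiftE E G) ∘ phiExt φ)^[t + 1] (k, Function.update γ (t + 1) g)).1 =
      (φ (((⇑(shiftE E G) ∘ phiExt φ)^[t] (k, γ)).1, g)).1 := by
  rw [iterate_succ_shiftE_comp_phiExt_fst, iterate_shiftE_comp_phiExt_fst_congr φ t k
    (γ' := γ) fun s _ hs => Function.update_of_ne (by omega) _ _]
  simp

end Dilation

def couplingEquiv (E : Type*) [DecidableEq E] : E × E × (E → E) ≃ E × E × (E → E) where
  toFun p := (p.2.2 p.1, p.1, Function.update p.2.2 p.1 p.2.1)
  invFun p := (p.2.1, p.2.2 p.2.1, Function.update p.2.2 p.2.1 p.1)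
  left_inv := by rintro ⟨i, m, ℓ⟩; simp
  right_inv := by rintro ⟨j, i, ℓ⟩; simp

@[simp]
theorem couplingEquiv_apply_fst {E : Type*} [DecidableEq E] (i : E) (g : E × (E → E)) :
    (couplingEquiv E (i, g)).1 = g.2 i :=
  rfl

theorem sum_ite_apply_eq_prod_of_sum_eq_one {ι β : Type*} [Fintype ι] [DecidableEq ι]
    [Fintype β] [DecidableEq β] (P : ι → β → ℝ) (hP : ∀ i, ∑ y, P i y = 1) (x : ι) (j : β) :
    ∑ ℓ : ι → β, (if ℓ x = j then ∏ i, P i (ℓ i) else 0) = P x j := by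
  -- restricting row `x` to the column `j` turns the constraint `ℓ x = j` into a factor
  set P' : ι → β → ℝ := Function.update P x fun y => if y = j then P x y else 0
  have hprod (ℓ : ι → β) :
      ∏ i, P' i (ℓ i) = if ℓ x = j then ∏ i, P i (ℓ i) else 0 := by
    split_ifs with hℓ
    · refine prod_congr rfl fun i _ => ?_
      rcases eq_or_ne i x with rfl | hi
      · simp [P', hℓ]
      · simp [P', hi]
    · exact prod_eq_zero (mem_univ x) (by simp [P', hℓ])
  calc ∑ ℓ : ι → β, (if ℓ x = j then ∏ i, P i (ℓ i) else 0)
      = ∑ ℓ : ι → β, ∏ i, P' i (ℓ i) := by simp only [hprod]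
    _ = ∏ i, ∑ y, P' i y := (Fintype.prod_sum P').symm
    _ = P x j := by
      rw [Fintype.prod_eq_single x fun i hi => by simp [P', hi, hP]]
      simp [P']

section EnvLaw

variable {E : Type*} [Fintype E] [DecidableEq E]

-- the paper's `δ₁ ⊗ q(n)`: under `q(n)` the values `ℓ i` are independent, `ℓ i ∼ P(n) i`
def envLaw (e₀ : E) (P : Matrix E E ℝ) (g : E × (E → E)) : ℝ :=
  (if g.1 = e₀ then 1 else 0) * ∏ i, P i (g.2 i)

variable {P : Matrix E E ℝ}

theorem envLaw_nonneg (hP : ∀ i j, 0 ≤ P i j) (e₀ : E) (g : E × (E → E)) :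
    0 ≤ envLaw e₀ P g :=
  mul_nonneg (by split_ifs <;> norm_num) (prod_nonneg fun i _ => hP i _)

theorem sum_envLaw (hP : ∀ i, ∑ j, P i j = 1) (e₀ : E) :
    ∑ g, envLaw e₀ P g = 1 :=
  calc ∑ g, envLaw e₀ P g
      = (∑ a : E, if a = e₀ then (1 : ℝ) else 0) * ∑ ℓ : E → E, ∏ i, P i (ℓ i) := by
        rw [Fintype.sum_mul_sum, Fintype.sum_prod_type]
        rfl
    _ = 1 := by rw [← Fintype.prod_sum (κ := fun _ => E) P]; simp [hP]

theorem sum_envLaw_ite_apply_eq (hP : ∀ i, ∑ j, P i j = 1) (e₀ : E) (x j : E) :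
    ∑ g : E × (E → E), (if g.2 x = j then envLaw e₀ P g else 0) = P x j :=
  calc ∑ g : E × (E → E), (if g.2 x = j then envLaw e₀ P g else 0)
      = (∑ a : E, if a = e₀ then (1 : ℝ) else 0) *
          ∑ ℓ : E → E, (if ℓ x = j then ∏ i, P i (ℓ i) else 0) := by
        rw [Fintype.sum_mul_sum, Fintype.sum_prod_type]
        simp only [envLaw, mul_ite_zero]
    _ = P x j := by simp [sum_ite_apply_eq_prod_of_sum_eq_one P hP]

end EnvLaw

/-- Universal dilation existence: for every finite state space there are a finite
environment alphabet `G` and a bijective coupling `φ₁` (giving `α = ϑ ∘ φ₁` on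
`E × G^ℤ`) such that any sequence of stochastic matrices `P(t)` is realized by a
product probability `Q_P` on the environment coordinates: the conditional
probability that `X_{t+1} = j` given `X₀ = k, Y₁, …, Y_t` equals `p_{X_t j}(t+1)`. -/
theorem stmt12 (N : ℕ) :
    ∃ (G : Type) (_ : Fintype G) (φ : (Fin N × G) ≃ (Fin N × G)),
      ∀ P : ℕ → Matrix (Fin N) (Fin N) ℝ,
        (∀ t, (∀ i j, 0 ≤ P t i j) ∧ ∀ i, ∑ j, P t i j = 1) →
        ∃ Q : ℕ → G → ℝ,
          (∀ n, (∀ g, 0 ≤ Q n g) ∧ ∑ g, Q n g = 1) ∧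
          ∀ (t : ℕ) (k j : Fin N) (γ : ℤ → G),
            (∏ s ∈ Finset.range t, Q (s + 1) (γ ((s : ℤ) + 1))) ≠ 0 →
            (∑ g : G,
                if ((((⇑(shiftE (Fin N) G)) ∘ phiExt ⇑φ)^[t + 1]
                      (k, Function.update γ ((t : ℤ) + 1) g)).1 = j)
                then Q (t + 1) g else 0)
              = P (t + 1) ((((⇑(shiftE (Fin N) G)) ∘ phiExt ⇑φ)^[t] (k, γ)).1) j := by
  rcases isEmpty_or_nonempty (Fin N) with hE | ⟨⟨e₀⟩⟩
  · exact ⟨Unit, inferInstance, Equiv.refl _, fun _ _ =>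
      ⟨fun _ _ => 1, fun _ => ⟨fun _ => zero_le_one, by simp⟩, fun _ k => isEmptyElim k⟩⟩
  refine ⟨Fin N × (Fin N → Fin N), inferInstance, couplingEquiv (Fin N), fun P hP => ?_⟩
  refine ⟨fun m => envLaw e₀ (P m),
    fun m => ⟨envLaw_nonneg (hP m).1 e₀, sum_envLaw (hP m).2 e₀⟩, fun t k j γ _ => ?_⟩
  simp only [iterate_succ_shiftE_comp_phiExt_fst_update, couplingEquiv_apply_fst]
  exact sum_envLaw_ite_apply_eq (hP (t + 1)).2 e₀ _ j
end

section
/- In the universal dilation construction, the system evolution is recovered in expectation: for every f : E → ℂ, every k ∈ E, and every t ≥ 0, (P(1)···P(t) f)(k) = 𝔼_{k,P}[f(X₀∘αᵗ)] = 𝔼_{k,P}[f(αᵗ(k, Υ₀))]. -/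
def itc {α : Type*} (ℓ : ℕ → α → α) : ℕ → α → α
  | 0, i => i
  | (t+1), i => ℓ t (itc ℓ t i)

lemma itc_congr {α : Type*} {ℓ ℓ' : ℕ → α → α} {t : ℕ} (h : ∀ s < t, ℓ s = ℓ' s) (i : α) :
    itc ℓ t i = itc ℓ' t i := by
  induction t with
  | zero => rfl
  | succ t ih =>
    simp only [itc]
    rw [ih (fun s hs => h s (Nat.lt_succ_of_lt hs)), h t (Nat.lt_succ_self t)]

lemma itc_shift {α : Type*} (ℓ : ℕ → α → α) (t : ℕ) (i : α) :
    itc ℓ (t+1) i = itc (fun s => ℓ (s+1)) t (ℓ 0 i) := by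
  induction t with
  | zero => rfl
  | succ t ih => simp only [itc] at *; rw [ih]

lemma orbit {N : ℕ} (e1 : Fin N)
    (φ : (Fin N × (Fin N × (Fin N → Fin N))) ≃ (Fin N × (Fin N × (Fin N → Fin N))))
    (hφ : ∀ (i : Fin N) (ℓ : Fin N → Fin N), φ (i, (e1, ℓ)) = (ℓ i, (i, ℓ)))
    (t : ℕ) (ℓ : ℕ → Fin N → Fin N)
    (ω : Fin N × (ℤ → Fin N × (Fin N → Fin N)))
    (hω : ∀ s < t, ω.2 ((s : ℤ) + 1) = (e1, ℓ s)) :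
    (((⇑(shiftE (Fin N) (Fin N × (Fin N → Fin N)))) ∘ phiExt ⇑φ)^[t] ω).1
      = itc ℓ t ω.1 := by
  induction t generalizing ℓ ω with
  | zero => rfl
  | succ t ih =>
    rw [Function.iterate_succ_apply]
    have h1 : ω.2 1 = (e1, ℓ 0) := by
      have := hω 0 t.succ_pos; simpa using this
    have hstep : ((shiftE (Fin N) (Fin N × (Fin N → Fin N))) ∘ phiExt ⇑φ) ω
        = (ℓ 0 ω.1, fun n => (Function.update ω.2 1 (ω.1, ℓ 0)) (n + 1)) := by
      simp [phiExt, shiftE, h1, hφ, Function.comp]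
    rw [hstep, ih (fun s => ℓ (s+1)) _ ?_, ← itc_shift]
    intro s hs
    have hne : ((s : ℤ) + 1) + 1 ≠ 1 := by omega
    show Function.update ω.2 1 (ω.1, ℓ 0) ((s:ℤ) + 1 + 1) = _
    rw [Function.update_of_ne hne]
    have := hω (s+1) (by omega)
    push_cast at this ⊢
    convert this using 2
    try ring

lemma step {N : ℕ} (c : (Fin N → Fin N) → ℝ) (f : Fin N → ℂ) (j : Fin N) :
    (((∑ ℓ : Fin N → Fin N, c ℓ • Matrix.of fun i j => if ℓ i = j then (1:ℝ) else 0).map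
        ((↑) : ℝ → ℂ)).mulVec f) j = ∑ ℓ : Fin N → Fin N, (c ℓ : ℂ) * f (ℓ j) := by
  classical
  simp only [Matrix.mulVec, dotProduct, Matrix.map_apply, Matrix.sum_apply,
    Matrix.smul_apply, Matrix.of_apply, smul_eq_mul, mul_ite, mul_one, mul_zero,
    Complex.ofReal_sum, Finset.sum_mul]
  rw [Finset.sum_comm]
  refine Finset.sum_congr rfl fun ℓ _ => ?_
  simp only [apply_ite (Complex.ofReal), Complex.ofReal_zero, ite_mul, zero_mul]
  rw [Finset.sum_ite_eq (Finset.univ) (ℓ j) (fun j' => (c ℓ : ℂ) * f j')]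
  simp

lemma matside {N : ℕ} (q : ℕ → (Fin N → Fin N) → ℝ) (t : ℕ) (f : Fin N → ℂ) (k : Fin N) :
    (((List.range t).map (fun s =>
        ((∑ ℓ, q (s+1) ℓ • Matrix.of fun i j => if ℓ i = j then (1:ℝ) else 0)).map
          ((↑) : ℝ → ℂ))).prod.mulVec f) k
      = ∑ ℓ : Fin t → (Fin N → Fin N), (↑(∏ s : Fin t, q ((s:ℕ)+1) (ℓ s)) : ℂ) *
          f (itc (fun s => if h : s < t then ℓ ⟨s, h⟩ else id) t k) := by
  classical
  induction t generalizing f with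
  | zero => simp [itc, Matrix.mulVec_one]
  | succ t ih =>
    rw [List.range_succ, List.map_append, List.prod_append, List.map_singleton,
      List.prod_singleton, ← Matrix.mulVec_mulVec]
    rw [ih]
    rw [← Equiv.sum_comp (Fin.snocEquiv (fun _ => (Fin N → Fin N)))
      (fun ℓ => (↑(∏ s : Fin (t+1), q ((s:ℕ)+1) (ℓ s)) : ℂ) *
        f (itc (fun s => if h : s < t+1 then ℓ ⟨s, h⟩ else id) (t+1) k))]
    simp only [Fin.snocEquiv_apply]
    rw [Fintype.sum_prod_type, Finset.sum_comm]
    refine Finset.sum_congr rfl fun ℓ _ => ?_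
    rw [step]
    rw [Finset.mul_sum]
    refine Finset.sum_congr rfl fun m _ => ?_
    have hsnoc : ∀ (s : ℕ) (h : s < t), (Fin.snoc ℓ m : Fin (t+1) → _) ⟨s, by omega⟩ = ℓ ⟨s, h⟩ := by
      intro s h
      have : (⟨s, by omega⟩ : Fin (t+1)) = Fin.castSucc ⟨s, h⟩ := rfl
      rw [this, Fin.snoc_castSucc]
    have hit : itc (fun s => if h : s < t+1 then (Fin.snoc ℓ m : Fin (t+1) → _) ⟨s, h⟩ else id)
        (t+1) k = m (itc (fun s => if h : s < t then ℓ ⟨s, h⟩ else id) t k) := by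
      simp only [itc]
      rw [dif_pos (Nat.lt_succ_self t)]
      have hl : (⟨t, Nat.lt_succ_self t⟩ : Fin (t+1)) = Fin.last t := rfl
      rw [hl, Fin.snoc_last]
      congr 1
      refine itc_congr (fun s hs => ?_) k
      simp only [dif_pos hs, dif_pos (Nat.lt_succ_of_lt hs), hsnoc s hs]
    rw [hit]
    rw [Fin.prod_univ_castSucc]
    have h1 : ∀ s : Fin t, (Fin.snoc ℓ m : Fin (t+1) → _) s.castSucc = ℓ s := fun s =>
      Fin.snoc_castSucc ..
    simp only [h1, Fin.coe_castSucc, Fin.snoc_last, Fin.val_last, Complex.ofReal_mul]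
    ring


/-- In the universal dilation construction (with `G = E × L`, `L = (E → E)`,
`φ(i,(1,ℓ)) = (ℓ(i),(i,ℓ))`, `Q(n) = δ₁ ⊗ q(n)`), the system evolution is
recovered in expectation: `(P(1)⋯P(t) f)(k) = 𝔼_{k,P}[f(αᵗ(k,Υ₀))]`. -/
theorem stmt13 (N : ℕ) (e1 : Fin N)
    (φ : (Fin N × (Fin N × (Fin N → Fin N))) ≃ (Fin N × (Fin N × (Fin N → Fin N))))
    (hφ : ∀ (i : Fin N) (ℓ : Fin N → Fin N), φ (i, (e1, ℓ)) = (ℓ i, (i, ℓ)))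
    (q : ℕ → (Fin N → Fin N) → ℝ)
    (hq0 : ∀ n ℓ, 0 ≤ q n ℓ) (hq1 : ∀ n, ∑ ℓ, q n ℓ = 1)
    (P : ℕ → Matrix (Fin N) (Fin N) ℝ)
    (hP : ∀ n, P n = ∑ ℓ, q n ℓ • Matrix.of (fun i j => if ℓ i = j then (1 : ℝ) else 0))
    (Q : ℕ → (Fin N × (Fin N → Fin N)) → ℝ)
    (hQ : ∀ n g, Q n g = if g.1 = e1 then q n g.2 else 0)
    (f : Fin N → ℂ) (k : Fin N) (t : ℕ)
    (γext : (Fin t → Fin N × (Fin N → Fin N)) → (ℤ → Fin N × (Fin N → Fin N)))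
    (hγext : ∀ gs (s : Fin t), γext gs ((s : ℤ) + 1) = gs s) :
    (((List.range t).map (fun s => (P (s + 1)).map ((↑) : ℝ → ℂ))).prod.mulVec f) k
      = ∑ gs : Fin t → Fin N × (Fin N → Fin N),
          (↑(∏ s : Fin t, Q ((s : ℕ) + 1) (gs s)) : ℂ) *
            f ((((⇑(shiftE (Fin N) (Fin N × (Fin N → Fin N)))) ∘ phiExt ⇑φ)^[t]
                (k, γext gs)).1) := by

  classical
  simp only [hP]
  rw [matside q t f k]
  set ι : (Fin t → (Fin N → Fin N)) → (Fin t → Fin N × (Fin N → Fin N)) :=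
    fun ℓ => fun s => (e1, ℓ s) with hι
  set F : (Fin t → Fin N × (Fin N → Fin N)) → ℂ := fun gs =>
    (↑(∏ s : Fin t, Q ((s : ℕ) + 1) (gs s)) : ℂ) *
      f ((((⇑(shiftE (Fin N) (Fin N × (Fin N → Fin N)))) ∘ phiExt ⇑φ)^[t]
          (k, γext gs)).1) with hF
  have h0 : ∀ gs ∈ (Finset.univ : Finset (Fin t → Fin N × (Fin N → Fin N))),
      gs ∉ Finset.univ.image ι → F gs = 0 := by
    intro gs _ hgs
    have : ¬ ∀ s, (gs s).1 = e1 := by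
      intro hall
      refine hgs (Finset.mem_image.mpr ⟨fun s => (gs s).2, Finset.mem_univ _, ?_⟩)
      funext s
      show (e1, (gs s).2) = gs s
      rw [← hall s]
    push_neg at this
    obtain ⟨s0, hs0⟩ := this
    have : ∏ s : Fin t, Q ((s : ℕ) + 1) (gs s) = 0 :=
      Finset.prod_eq_zero (Finset.mem_univ s0) (by rw [hQ]; exact if_neg hs0)
    show (↑(∏ s : Fin t, Q ((s : ℕ) + 1) (gs s)) : ℂ) * _ = 0
    rw [this]
    simp
  have hinj : ∀ x ∈ (Finset.univ : Finset (Fin t → (Fin N → Fin N))), ∀ y ∈ Finset.univ,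
      ι x = ι y → x = y := by
    intro x _ y _ hxy
    funext s
    have := congrFun hxy s
    simpa [hι] using congrArg Prod.snd this
  rw [show (∑ gs : Fin t → Fin N × (Fin N → Fin N), F gs) = ∑ gs ∈ Finset.univ.image ι, F gs from
    (Finset.sum_subset (Finset.subset_univ _) h0).symm]
  rw [Finset.sum_image hinj]
  refine Finset.sum_congr rfl fun ℓ _ => ?_
  have hQq : ∏ s : Fin t, Q ((s : ℕ) + 1) (ι ℓ s) = ∏ s : Fin t, q ((s : ℕ) + 1) (ℓ s) :=
    Finset.prod_congr rfl fun s _ => by rw [hQ]; exact if_pos rfl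
  have horb : (((⇑(shiftE (Fin N) (Fin N × (Fin N → Fin N)))) ∘ phiExt ⇑φ)^[t]
      (k, γext (ι ℓ))).1 = itc (fun s => if h : s < t then ℓ ⟨s, h⟩ else id) t k := by
    refine orbit e1 φ hφ t _ _ ?_
    intro s hs
    have := hγext (ι ℓ) ⟨s, hs⟩
    simp only [hι] at this ⊢
    rw [dif_pos hs]
    exact this
  simp only [hF, hQq, horb]
end

section
/- (Dilation of T by a unitary coupling) Let G = E × L, 𝔷 = ℂ^{|G|} with basis {|j,ℓ⟩}, let V = Σ_{i,j,ℓ} |φ(i,(j,ℓ))⟩⟨i,j,ℓ| be the unitary permutation operator on ℂ^N ⊗ 𝔷 associated to a bijection φ of E × G satisfying φ(i,(1,ℓ)) = (β_ℓ(i),(i,ℓ)), and let φ = Σ_ℓ √q_ℓ |1,ℓ⟩ be a unit vector. Then for every operator a on ℂ^N and every density matrix ρ = Σ_{i,i'} ρ_{ii'}|i⟩⟨i'|: tr(V* (a⊗𝟙) V · ρ⊗|φ⟩⟨φ|) = tr(T[a]·ρ), where T[a] = Σ_{ℓ,i} q_ℓ |i⟩⟨β_ℓ(i)| a |β_ℓ(i)⟩⟨i|.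 -/
/-!
`V` is the permutation matrix of `φ⁻¹`, so conjugating by it relabels the entries of `a ⊗ 𝟙`
through `φ`. The environment state `|φ⟩⟨φ|` lives on the column `j = e1`, where
`φ(i,(e1,ℓ)) = (β_ℓ(i),(i,ℓ))`; the identity factor of `a ⊗ 𝟙` then forces the two environment
labels `(i,ℓ)` to agree, and the trace collapses to `∑_{ℓ,i} q_ℓ a_{β_ℓ(i) β_ℓ(i)} ρ_{ii}`, which is
also `tr(T[a] ρ)`.
-/

open ComplexOrder Matrix

open scoped Kronecker

namespace Matrix

variable {R : Type*}

theorem sum_single_apply_self_eq_permMatrix_inv {n : Type*} [Fintype n] [DecidableEq n]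
    [NonAssocSemiring R] (σ : Equiv.Perm n) :
    ∑ s, single (σ s) s (1 : R) = σ⁻¹.permMatrix R := by
  ext p r
  simp [Matrix.sum_apply, single_apply, and_comm, ite_and, PEquiv.toMatrix_apply,
    Equiv.eq_symm_apply, eq_comm]

theorem conjTranspose_permMatrix_inv_mul_mul_permMatrix_inv {n : Type*} [Fintype n]
    [DecidableEq n] [NonAssocSemiring R] [StarRing R] (σ : Equiv.Perm n) (A : Matrix n n R) :
    (σ⁻¹.permMatrix R)ᴴ * A * σ⁻¹.permMatrix R = A.submatrix σ σ := by
  rw [conjTranspose_permMatrix, inv_inv, PEquiv.toMatrix_toPEquiv_mul,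
    PEquiv.mul_toMatrix_toPEquiv]
  rfl

theorem trace_single_mul_mul_single_mul {n : Type*} [Fintype n] [DecidableEq n]
    [CommSemiring R] (i j : n) (a ρ : Matrix n n R) :
    (single i j 1 * a * single j i 1 * ρ).trace = a j j * ρ i i := by
  simp [trace, mul_apply, single_apply, ite_and, ite_mul, Finset.sum_ite_eq]

theorem trace_sum_smul_single_mul_mul_single_mul {n L : Type*} [Fintype n] [DecidableEq n]
    [Fintype L] [CommSemiring R] (β : L → n → n) (w : L → R) (a ρ : Matrix n n R) :
    ((∑ ℓ, ∑ i, w ℓ • (single i (β ℓ i) 1 * a * single (β ℓ i) i 1)) * ρ).trace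
      = ∑ ℓ, ∑ i, w ℓ * (a (β ℓ i) (β ℓ i) * ρ i i) := by
  simp only [Matrix.sum_mul, trace_sum, smul_mul, trace_smul, trace_single_mul_mul_single_mul,
    smul_eq_mul]

theorem trace_mul_kronecker_vecMulVec_of_eq_ite {m K L : Type*} [Fintype m] [Fintype K]
    [Fintype L] [DecidableEq K] [CommSemiring R] [StarRing R]
    (X : Matrix (m × (K × L)) (m × (K × L)) R) (ρ : Matrix m m R) (k : K) (c : L → R)
    (v : K × L → R) (hv : ∀ g, v g = if g.1 = k then c g.2 else 0) :
    (X * (ρ ⊗ₖ vecMulVec v (star v))).trace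
      = ∑ i, ∑ ℓ, ∑ j, ∑ ℓ', X (i, (k, ℓ)) (j, (k, ℓ')) * (ρ j i * (c ℓ' * star (c ℓ))) := by
  simp [trace, mul_apply, kroneckerMap_apply, vecMulVec_apply, hv, Fintype.sum_prod_type,
    apply_ite star, ite_mul, mul_ite, Finset.sum_ite_eq']

theorem trace_submatrix_kronecker_one_mul_kronecker_vecMulVec {m L : Type*} [Fintype m]
    [DecidableEq m] [Fintype L] [DecidableEq L] [CommSemiring R] [StarRing R]
    (β : L → m → m) (k : m) (φ : Equiv.Perm (m × (m × L)))
    (hφ : ∀ i ℓ, φ (i, (k, ℓ)) = (β ℓ i, (i, ℓ))) (a ρ : Matrix m m R) (c : L → R)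
    (v : m × L → R) (hv : ∀ g, v g = if g.1 = k then c g.2 else 0) :
    ((a ⊗ₖ (1 : Matrix (m × L) (m × L) R)).submatrix φ φ *
        (ρ ⊗ₖ vecMulVec v (star v))).trace
      = ∑ ℓ, ∑ i, c ℓ * star (c ℓ) * (a (β ℓ i) (β ℓ i) * ρ i i) := by
  rw [trace_mul_kronecker_vecMulVec_of_eq_ite _ ρ k c v hv, Finset.sum_comm]
  simp only [submatrix_apply, hφ, kroneckerMap_apply, one_apply, Prod.mk.injEq, ite_and,
    mul_ite, ite_mul, mul_one, mul_zero, zero_mul, Finset.sum_ite_irrel, Finset.sum_const_zero,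
    Finset.sum_ite_eq, Finset.mem_univ, if_true]
  refine Finset.sum_congr rfl fun ℓ _ => Finset.sum_congr rfl fun i _ => ?_
  ring

end Matrix

theorem stmt18_general (N : ℕ) (L : Type*) [Fintype L] [DecidableEq L]
    (β : L → Fin N → Fin N) (q : L → ℝ)
    (hq0 : ∀ ℓ, 0 ≤ q ℓ) (e1 : Fin N)
    (φ : (Fin N × (Fin N × L)) ≃ (Fin N × (Fin N × L)))
    (hφ : ∀ (i : Fin N) (ℓ : L), φ (i, (e1, ℓ)) = (β ℓ i, (i, ℓ)))
    (V : Matrix (Fin N × (Fin N × L)) (Fin N × (Fin N × L)) ℂ)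
    (hV : V = ∑ s : Fin N × (Fin N × L), Matrix.single (φ s) s 1)
    (φvec : (Fin N × L) → ℂ)
    (hφvec : ∀ g, φvec g = if g.1 = e1 then (Real.sqrt (q g.2) : ℂ) else 0)
    (a ρ : Matrix (Fin N) (Fin N) ℂ) :
    (Vᴴ *
        (Matrix.of (fun p r : Fin N × (Fin N × L) =>
          a p.1 r.1 * (if p.2 = r.2 then 1 else 0))) * V *
        (Matrix.of (fun p r : Fin N × (Fin N × L) =>
          ρ p.1 r.1 * (φvec p.2 * star (φvec r.2))))).trace
      = ((∑ ℓ, ∑ i, (q ℓ : ℂ) •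
          (Matrix.single i (β ℓ i) 1 * a * Matrix.single (β ℓ i) i 1))
          * ρ).trace := by
  have hA : of (fun p r : Fin N × (Fin N × L) => a p.1 r.1 * if p.2 = r.2 then 1 else 0)
      = a ⊗ₖ (1 : Matrix (Fin N × L) (Fin N × L) ℂ) := rfl
  have hS : of (fun p r : Fin N × (Fin N × L) => ρ p.1 r.1 * (φvec p.2 * star (φvec r.2)))
      = ρ ⊗ₖ vecMulVec φvec (star φvec) := rfl
  have hsqrt : ∀ ℓ, (√(q ℓ) : ℂ) * star (√(q ℓ) : ℂ) = q ℓ := fun ℓ => by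
    rw [Complex.star_def, Complex.conj_ofReal, ← Complex.ofReal_mul, Real.mul_self_sqrt (hq0 ℓ)]
  rw [hV, sum_single_apply_self_eq_permMatrix_inv, hA, hS,
    conjTranspose_permMatrix_inv_mul_mul_permMatrix_inv,
    trace_submatrix_kronecker_one_mul_kronecker_vecMulVec β e1 φ hφ a ρ (fun ℓ => (√(q ℓ) : ℂ))
      φvec hφvec,
    trace_sum_smul_single_mul_mul_single_mul]
  simp only [hsqrt]

/-- The unitary permutation operator `V` associated to the coupling `φ`, together
with the vector `φ_vec = ∑_ℓ √q_ℓ |1,ℓ⟩`, dilates the stochastic map `T`: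
`tr(V* (a⊗𝟙) V · ρ ⊗ |φ⟩⟨φ|) = tr(T[a] ρ)` for every density matrix `ρ`. -/
theorem stmt18 (N : ℕ) (L : Type*) [Fintype L] [DecidableEq L]
    (β : L → Fin N → Fin N) (q : L → ℝ)
    (hq0 : ∀ ℓ, 0 ≤ q ℓ) (hq1 : ∑ ℓ, q ℓ = 1) (e1 : Fin N)
    (φ : (Fin N × (Fin N × L)) ≃ (Fin N × (Fin N × L)))
    (hφ : ∀ (i : Fin N) (ℓ : L), φ (i, (e1, ℓ)) = (β ℓ i, (i, ℓ)))
    (V : Matrix (Fin N × (Fin N × L)) (Fin N × (Fin N × L)) ℂ)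
    (hV : V = ∑ s : Fin N × (Fin N × L), Matrix.single (φ s) s 1)
    (φvec : (Fin N × L) → ℂ)
    (hφvec : ∀ g, φvec g = if g.1 = e1 then (Real.sqrt (q g.2) : ℂ) else 0)
    (a ρ : Matrix (Fin N) (Fin N) ℂ)
    (hρ : ρ.PosSemidef) (hρtr : ρ.trace = 1) :
    (Vᴴ *
        (Matrix.of (fun p r : Fin N × (Fin N × L) =>
          a p.1 r.1 * (if p.2 = r.2 then 1 else 0))) * V *
        (Matrix.of (fun p r : Fin N × (Fin N × L) =>
          ρ p.1 r.1 * (φvec p.2 * star (φvec r.2))))).trace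
      = ((∑ ℓ, ∑ i, (q ℓ : ℂ) •
          (Matrix.single i (β ℓ i) 1 * a * Matrix.single (β ℓ i) i 1))
          * ρ).trace :=
  stmt18_general N L β q hq0 e1 φ hφ V hV φvec hφvec a ρ
end
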